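/- For every x with 0 < x ≤ 1/√2, the inverse of the binary entropy function satisfies h₂^{−1}(x) ≥ x/(8·log₂(1/x)); equivalently, h₂( x/(8·log₂(1/x)) ) ≤ x, where h₂(y) = −y·log₂ y − (1−y)·log₂(1−y) and h₂^{−1} denotes the inverse of h₂ restricted to [0, 1/2]. -/

import Mathlib

/-! With `L = log₂(1/x) ≥ 1/2` and `y = x/(8L)`, the bound `-(1-y)·ln(1-y) ≤ y` gives
`h₂(y)·ln 2 ≤ y·(ln(1/y) + 1) = y·(ln(8L) + L·ln 2 + 1)`, and `ln(8L) ≤ 2 ln 2 + 2L - 1`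
together with `ln 2 > 2/3` bounds this by `8L·y·ln 2 = x·ln 2`. Since `h₂` is an increasing
bijection `[0, 1/2] → [0, 1]`, `h₂(y) ≤ x` is the same as `y ≤ h₂⁻¹(x)`. -/

/-- The binary entropy function `h₂(y) = -y·log₂ y - (1-y)·log₂(1-y)`
(with `h₂(0) = h₂(1) = 0`, since `log 0 = 0` in Mathlib). -/
noncomputable def h2 (y : ℝ) : ℝ := -y * Real.logb 2 y - (1 - y) * Real.logb 2 (1 - y)

/-- The inverse of `h₂` restricted to `[0, 1/2]`. -/
noncomputable def h2inv : ℝ → ℝ := Function.invFunOn h2 (Set.Icc 0 (1 / 2))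

open Real Set

lemma h2_eq_binEntropy_div_log_two (y : ℝ) : h2 y = binEntropy y / log 2 := by
  unfold h2 binEntropy logb
  rw [log_inv, log_inv]
  ring

lemma h2_zero : h2 0 = 0 := by simp [h2]

lemma h2_half : h2 (1 / 2) = 1 := by
  rw [h2_eq_binEntropy_div_log_two, one_div, binEntropy_two_inv]
  exact div_self (log_pos one_lt_two).ne'

lemma continuous_h2 : Continuous h2 := by
  simpa only [funext h2_eq_binEntropy_div_log_two] using binEntropy_continuous.div_const _

lemma strictMonoOn_h2 : StrictMonoOn h2 (Icc 0 (1 / 2)) := by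
  intro a ha b hb hab
  rw [one_div] at ha hb
  simp only [h2_eq_binEntropy_div_log_two]
  exact div_lt_div_of_pos_right (binEntropy_strictMonoOn ha hb hab) (log_pos one_lt_two)

lemma surjOn_h2 : SurjOn h2 (Icc 0 (1 / 2)) (Icc 0 1) := by
  have h := intermediate_value_Icc (by norm_num : (0 : ℝ) ≤ 1 / 2) continuous_h2.continuousOn
  rwa [h2_zero, h2_half] at h

lemma le_h2inv_of_h2_le {x y : ℝ} (hx : x ∈ Icc (0 : ℝ) 1) (hy : y ∈ Icc (0 : ℝ) (1 / 2))
    (h : h2 y ≤ x) : y ≤ h2inv x := by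
  have hpre : ∃ z ∈ Icc (0 : ℝ) (1 / 2), h2 z = x := surjOn_h2 hx
  refine (strictMonoOn_h2.le_iff_le hy (Function.invFunOn_mem hpre)).mp ?_
  rwa [Function.invFunOn_eq hpre]

lemma neg_mul_log_one_sub_le {y : ℝ} (hy : y ≤ 1) : -((1 - y) * log (1 - y)) ≤ y := by
  rcases hy.lt_or_eq with hy | rfl
  · have hlog := log_le_sub_one_of_pos (inv_pos.mpr (sub_pos.mpr hy))
    rw [log_inv] at hlog
    calc -((1 - y) * log (1 - y)) = (1 - y) * -log (1 - y) := by ring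
      _ ≤ (1 - y) * ((1 - y)⁻¹ - 1) := by gcongr
      _ = y := by field_simp; ring
  · simp

lemma binEntropy_le_neg_mul_log_add_self {y : ℝ} (hy : y ≤ 1) :
    binEntropy y ≤ -y * log y + y := by
  have h := neg_mul_log_one_sub_le hy
  rw [binEntropy, log_inv, log_inv]
  linarith

lemma log_eight_mul_add_one_add_mul_log_two_le {L : ℝ} (hL : 1 / 2 ≤ L) :
    log (8 * L) + 1 + L * log 2 ≤ 8 * L * log 2 := by
  have hlog2 : 2 / 3 < log 2 := lt_trans (by norm_num) log_two_gt_d9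
  have hlog_two_mul : log (2 * L) ≤ 2 * L - 1 := log_le_sub_one_of_pos (by linarith)
  have hlog_eight_mul : log (8 * L) = 2 * log 2 + log (2 * L) := by
    rw [show 8 * L = 2 ^ 2 * (2 * L) by ring, log_mul (by norm_num) (by linarith), log_pow]
    norm_num
  nlinarith

lemma half_le_logb_two_one_div {x : ℝ} (hx0 : 0 < x) (hx : x ≤ 1 / √2) :
    1 / 2 ≤ logb 2 (1 / x) := by
  rw [le_logb_iff_rpow_le one_lt_two (by positivity), ← sqrt_eq_rpow]
  rwa [le_one_div (by positivity) hx0]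

lemma one_div_sqrt_two_le_one : 1 / √2 ≤ 1 :=
  (div_le_one (by positivity)).mpr one_lt_sqrt_two.le

lemma div_eight_mul_logb_mem_Icc {x : ℝ} (hx0 : 0 < x) (hx : x ≤ 1 / √2) :
    x / (8 * logb 2 (1 / x)) ∈ Icc (0 : ℝ) (1 / 2) := by
  have hL := half_le_logb_two_one_div hx0 hx
  have hx1 := hx.trans one_div_sqrt_two_le_one
  refine ⟨by positivity, ?_⟩
  rw [div_le_iff₀ (by positivity)]
  linarith

lemma h2_div_eight_mul_logb_le {x : ℝ} (hx0 : 0 < x) (hx : x ≤ 1 / √2) :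
    h2 (x / (8 * logb 2 (1 / x))) ≤ x := by
  set L := logb 2 (1 / x)
  have hL : 1 / 2 ≤ L := half_le_logb_two_one_div hx0 hx
  have hlog2 : 0 < log 2 := log_pos one_lt_two
  set y := x / (8 * L) with hy
  have hy1 : y ≤ 1 := (div_eight_mul_logb_mem_Icc hx0 hx).2.trans (by norm_num)
  have hL_mul_log_two : L * log 2 = -log x := by
    simp only [L, logb, one_div, log_inv]
    field_simp
  have hneg_log_y : -log y = log (8 * L) + L * log 2 := by
    rw [← log_inv, hy, inv_div, log_div (by positivity) hx0.ne']
    linarith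
  have hkey := log_eight_mul_add_one_add_mul_log_two_le hL
  rw [h2_eq_binEntropy_div_log_two, div_le_iff₀ hlog2]
  calc binEntropy y ≤ -y * log y + y := binEntropy_le_neg_mul_log_add_self hy1
    _ = y * (log (8 * L) + 1 + L * log 2) := by rw [neg_mul, ← mul_neg, hneg_log_y]; ring
    _ ≤ y * (8 * L * log 2) := by gcongr
    _ = x * log 2 := by rw [hy]; field_simp

/-- For `0 < x ≤ 1/√2` we have `h₂⁻¹(x) ≥ x/(8·log₂(1/x))`; equivalently
`h₂(x/(8·log₂(1/x))) ≤ x`. -/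
theorem binary_entropy_inverse_bound (x : ℝ) (hx0 : 0 < x) (hx : x ≤ 1 / Real.sqrt 2) :
    x / (8 * Real.logb 2 (1 / x)) ≤ h2inv x ∧
      h2 (x / (8 * Real.logb 2 (1 / x))) ≤ x := by
  have hbound := h2_div_eight_mul_logb_le hx0 hx
  have hx_mem : x ∈ Icc (0 : ℝ) 1 := ⟨hx0.le, hx.trans one_div_sqrt_two_le_one⟩
  exact ⟨le_h2inv_of_h2_le hx_mem (div_eight_mul_logb_mem_Icc hx0 hx) hbound, hbound⟩
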